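/- arXiv:2307.01358 — 4 statements merged into one kernel-verified Lean document; each statement's English description precedes it below -/
import Mathlib

section
/- Shift relation of the Gauss operator for a → a+1: for all a, b, c ∈ ℂ, the identity E(a+1,b,c) ∘ (x·∂ + a) = (x·∂ + a + 1) ∘ E(a,b,c) holds in End_ℂ(ℂ[x]). -/
open Polynomial

noncomputable section

abbrev EndP := Module.End ℂ (Polynomial ℂ)

/-- The formal derivative `∂` as a linear endomorphism of `ℂ[x]`. -/
def D : EndP := Polynomial.derivative

/-- Multiplication by the polynomial `p` as a linear endomorphism of `ℂ[x]`. -/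
def M (p : Polynomial ℂ) : EndP := LinearMap.mulLeft ℂ p

/-- The Gauss hypergeometric operator `E(a,b,c) = x(1-x)∂² + (c-(a+b+1)x)∂ - ab`. -/
def GaussE (a b c : ℂ) : EndP :=
  M (X * (1 - X)) * D ^ 2 + M (C c - C (a + b + 1) * X) * D - (a * b) • 1

/-- Shift relation of the Gauss operator for `a → a+1`:
`E(a+1,b,c) ∘ (x·∂ + a) = (x·∂ + a + 1) ∘ E(a,b,c)` in `End_ℂ(ℂ[x])`. -/
theorem gauss_shift_relation_a_plus (a b c : ℂ) :
    GaussE (a + 1) b c * (M X * D + a • 1) = (M X * D + (a + 1) • 1) * GaussE a b c := by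
  apply LinearMap.ext
  intro p
  simp only [GaussE, D, M, Module.End.mul_apply, LinearMap.add_apply, LinearMap.sub_apply,
    LinearMap.smul_apply, Module.End.one_apply, LinearMap.mulLeft_apply, pow_two,
    derivative_mul, derivative_add, derivative_sub, derivative_smul,
    derivative_X, derivative_one, derivative_C, map_one, derivative_zero, Polynomial.smul_eq_C_mul, map_mul, map_add, map_sub, map_smul]
  ring
end
end

section
/- S-value identity for the Gauss operator (shift a → a−1 → a): for all a, b, c ∈ ℂ, the identity (x·∂ + (a−1)) ∘ (x(1−x)·∂ + (c − a − b x)) = x ∘ E(a,b,c) − (a−1)(a−c)·id holds in End_ℂ(ℂ[x]); in particular the composition of the two shift operators acts as the scalar −(a−1)(a−c) on every solution of E(a,b,c). -/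
open Polynomial

noncomputable section

/-- S-value identity for the Gauss operator (shift `a → a−1 → a`):
`(x·∂ + (a−1)) ∘ (x(1−x)·∂ + (c − a − b x)) = x ∘ E(a,b,c) − (a−1)(a−c)·id`,
and in particular the composition of the two shift operators acts as the scalar
`−(a−1)(a−c)` on every solution of `E(a,b,c)`. -/
theorem gauss_svalue_a_minus (a b c : ℂ) :
    (M X * D + (a - 1) • 1) * (M (X * (1 - X)) * D + M (C c - C a - C b * X))
      = M X * GaussE a b c - ((a - 1) * (a - c)) • 1 ∧
    ∀ f : Polynomial ℂ, GaussE a b c f = 0 →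
      ((M X * D + (a - 1) • 1) * (M (X * (1 - X)) * D + M (C c - C a - C b * X))) f
        = (-((a - 1) * (a - c))) • f := by
  have h : (M X * D + (a - 1) • 1) * (M (X * (1 - X)) * D + M (C c - C a - C b * X))
      = M X * GaussE a b c - ((a - 1) * (a - c)) • 1 := by
    refine LinearMap.ext fun f => ?_
    simp only [GaussE, M, D, Module.End.mul_apply, LinearMap.add_apply, LinearMap.sub_apply,
      LinearMap.smul_apply, Module.End.one_apply, LinearMap.mulLeft_apply, pow_two,
      derivative_mul, derivative_add, derivative_sub, derivative_X, derivative_one,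
      derivative_C, map_add, map_sub, smul_eq_C_mul]
    simp only [C_mul, C_add, C_sub, C_neg, C_pow, C_1, map_ofNat]
    ring
  refine ⟨h, fun f hf => ?_⟩
  rw [h]
  simp [hf, M, neg_smul]
end
end

section
/- Existence of polynomial solutions (Proposition on polynomial solutions): let m ∈ ℕ and let H ∈ End_ℂ(ℂ[x]) be an operator of the form H = p(θ) ∘ (θ − m·id) + B ∘ ∂, where p(θ) = ∑_i c_i θ^i for some c_i ∈ ℂ and B belongs to the (non-commutative) subalgebra of End_ℂ(ℂ[x]) generated by θ and ∂. Then there exists a nonzero polynomial f ∈ ℂ[x] with deg f ≤ m and H(f) = 0. -/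
open Polynomial

noncomputable section

/-- The Euler operator `θ = x·∂`. -/
def θop : EndP := M X * D


lemma θop_coeff (f : Polynomial ℂ) (k : ℕ) : (θop f).coeff k = f.coeff k * k := by
  show (X * derivative f).coeff k = _
  cases k with
  | zero => simp [mul_coeff_zero]
  | succ n => simp [coeff_X_mul, coeff_derivative]

lemma θop_mem {n : ℕ} {f : Polynomial ℂ} (hf : f ∈ degreeLT ℂ n) : θop f ∈ degreeLT ℂ n := by
  rw [mem_degreeLT, Polynomial.degree_lt_iff_coeff_zero] at *
  intro k hk
  rw [θop_coeff, hf k hk, zero_mul]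

lemma D_mem' {n : ℕ} {f : Polynomial ℂ} (hf : f ∈ degreeLT ℂ n) : D f ∈ degreeLT ℂ n := by
  rw [mem_degreeLT, Polynomial.degree_lt_iff_coeff_zero] at *
  intro k hk
  show (derivative f).coeff k = 0
  rw [coeff_derivative, hf (k+1) (by exact_mod_cast by omega), zero_mul]

lemma adjoin_mem {n : ℕ} {B : EndP} (hB : B ∈ Algebra.adjoin ℂ ({θop, D} : Set EndP)) :
    ∀ f ∈ degreeLT ℂ n, B f ∈ degreeLT ℂ n := by
  induction hB using Algebra.adjoin_induction with
  | mem x hx =>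
    rcases hx with h | h
    · subst h; exact fun f hf => θop_mem hf
    · simp only [Set.mem_singleton_iff] at h; subst h; exact fun f hf => D_mem' hf
  | algebraMap c => intro f hf
                    simpa using Submodule.smul_mem _ c hf
  | add x y hx hy ihx ihy => intro f hf; simpa [LinearMap.add_apply] using Submodule.add_mem _ (ihx f hf) (ihy f hf)
  | mul x y hx hy ihx ihy => intro f hf; exact ihx _ (ihy f hf)

lemma shift_mem {m : ℕ} {f : Polynomial ℂ} (hf : f ∈ degreeLT ℂ (m+1)) :
    (θop - ((m : ℂ)) • 1) f ∈ degreeLT ℂ m := by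
  rw [mem_degreeLT, Polynomial.degree_lt_iff_coeff_zero] at *
  intro k hk
  have hk' : m ≤ k := by exact_mod_cast hk
  simp only [LinearMap.sub_apply, LinearMap.smul_apply, Module.End.one_apply,
    Polynomial.coeff_sub, Polynomial.coeff_smul, θop_coeff, smul_eq_mul]
  rcases eq_or_lt_of_le hk' with h | h
  · subst h; ring
  · rw [hf k (by exact_mod_cast Nat.cast_le.mpr h), mul_zero, zero_mul, sub_zero]

lemma aeval_mem_adjoin (p : Polynomial ℂ) :
    Polynomial.aeval θop p ∈ Algebra.adjoin ℂ ({θop, D} : Set EndP) := by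
  have : Polynomial.aeval θop p ∈ Algebra.adjoin ℂ ({θop} : Set EndP) := by
    rw [Algebra.adjoin_singleton_eq_range_aeval]
    exact ⟨p, rfl⟩
  exact Algebra.adjoin_mono (by simp) this

/-- Existence of polynomial solutions: if `H = p(θ) ∘ (θ − m·id) + B ∘ ∂` with `p` a
polynomial and `B` in the subalgebra of `End_ℂ(ℂ[x])` generated by `θ` and `∂`, then
`H` kills a nonzero polynomial of degree at most `m`. -/
theorem exists_polynomial_solution (m : ℕ) (H : EndP)
    (hH : ∃ (p : Polynomial ℂ) (B : EndP),
      B ∈ Algebra.adjoin ℂ ({θop, D} : Set EndP) ∧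
      H = Polynomial.aeval θop p * (θop - ((m : ℂ)) • 1) + B * D) :
    ∃ f : Polynomial ℂ, f ≠ 0 ∧ f.natDegree ≤ m ∧ H f = 0 := by
  obtain ⟨p, B, hB, rfl⟩ := hH
  have key : ∀ f ∈ degreeLT ℂ (m+1),
      (Polynomial.aeval θop p * (θop - ((m : ℂ)) • 1) + B * D) f ∈ degreeLT ℂ m := by
    intro f hf
    have h1 : (Polynomial.aeval θop p) ((θop - ((m : ℂ)) • 1) f) ∈ degreeLT ℂ m :=
      adjoin_mem (aeval_mem_adjoin p) _ (shift_mem hf)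
    have h2 : B (D f) ∈ degreeLT ℂ m := by
      cases m with
      | zero =>
        have : f ∈ degreeLT ℂ 1 := hf
        exact adjoin_mem hB _ (by
          rw [mem_degreeLT, Polynomial.degree_lt_iff_coeff_zero] at this ⊢
          intro k hk
          show (derivative f).coeff k = 0
          rw [coeff_derivative, this (k+1) (by exact_mod_cast by omega), zero_mul])
      | succ n =>
        refine adjoin_mem hB _ ?_
        rw [mem_degreeLT, Polynomial.degree_lt_iff_coeff_zero] at hf ⊢
        intro k hk
        have : n + 1 ≤ k := by exact_mod_cast hk
        show (derivative f).coeff k = 0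
        rw [coeff_derivative, hf (k+1) (by exact_mod_cast by omega), zero_mul]
    simpa using Submodule.add_mem _ h1 h2
  set Hfull : EndP := Polynomial.aeval θop p * (θop - ((m : ℂ)) • 1) + B * D
  let L : degreeLT ℂ (m+1) →ₗ[ℂ] degreeLT ℂ m :=
    LinearMap.codRestrict _ (Hfull.domRestrict (degreeLT ℂ (m+1)))
      (fun x => key x x.2)
  have hnotinj : ¬ Function.Injective L := by
    intro hinj
    have h1 : Module.finrank ℂ (degreeLT ℂ (m+1)) = m+1 :=
      (Polynomial.degreeLTEquiv ℂ (m+1)).finrank_eq.trans (by simp)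
    have h2 : Module.finrank ℂ (degreeLT ℂ m) = m :=
      (Polynomial.degreeLTEquiv ℂ m).finrank_eq.trans (by simp)
    have : Module.Finite ℂ (degreeLT ℂ m) := Module.Finite.equiv (Polynomial.degreeLTEquiv ℂ m).symm
    have := LinearMap.finrank_le_finrank_of_injective hinj
    omega
  rw [Function.not_injective_iff] at hnotinj
  obtain ⟨a, b, hab, hne⟩ := hnotinj
  refine ⟨(a : Polynomial ℂ) - b, ?_, ?_, ?_⟩
  · intro h
    apply hne
    exact Subtype.ext (by exact sub_eq_zero.mp h)
  · have hd : ((a : Polynomial ℂ) - b).degree < (m+1 : ℕ) := by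
      have := Submodule.sub_mem _ a.2 b.2
      rwa [mem_degreeLT] at this
    by_cases h0 : (a : Polynomial ℂ) - b = 0
    · simp [h0]
    · have := (Polynomial.natDegree_lt_iff_degree_lt h0).mpr (by exact_mod_cast hd)
      omega
  · have : Hfull ((a : Polynomial ℂ) - b) = Hfull a - Hfull b := map_sub _ _ _
    rw [this]
    have : Hfull (a : Polynomial ℂ) = Hfull (b : Polynomial ℂ) := congrArg Subtype.val hab
    rw [this, sub_self]
end
end

section
/- Invariant ring lemma: let n ≥ 1 and let P ∈ ℂ[x₁,…,xₙ] be a symmetric polynomial invariant under the simultaneous shift (x₁,…,xₙ) ↦ (x₁+1,…,xₙ+1). Set y₀ := (x₁+⋯+xₙ)/n, y_k := x_k − y₀ for k = 1,…,n, and let t_i (i = 2,…,n) be the i-th elementary symmetric polynomial in y₁,…,yₙ. Then P belongs to the ℂ-subalgebra of ℂ[x₁,…,xₙ] generated by t₂,…,tₙ, and moreover t₂,…,tₙ are algebraically independent over ℂ. -/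
noncomputable section

/-- `y₀ = (x₁ + ⋯ + xₙ)/n`. -/
def y0 (n : ℕ) : MvPolynomial (Fin n) ℂ :=
  MvPolynomial.C ((n : ℂ)⁻¹) * ∑ i : Fin n, MvPolynomial.X i

/-- `y_k = x_k − y₀`. -/
def ypoly (n : ℕ) (k : Fin n) : MvPolynomial (Fin n) ℂ :=
  MvPolynomial.X k - y0 n

/-- `t_{i+2}`: the `(i+2)`-nd elementary symmetric polynomial in `y₁, …, yₙ`,
for `i = 0, …, n−2` (so the degrees range over `2, …, n`). -/
def tpoly (n : ℕ) (i : Fin (n - 1)) : MvPolynomial (Fin n) ℂ :=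
  ∑ A ∈ Finset.powersetCard (i.val + 2) (Finset.univ : Finset (Fin n)),
    ∏ k ∈ A, ypoly n k

/-! ### Combinatorial lemmas -/

lemma card_filter_superset {n m j : ℕ} (B : Finset (Fin n)) (hB : B.card = j) (hjm : j ≤ m) :
    ((Finset.powersetCard m (Finset.univ : Finset (Fin n))).filter (fun A => B ⊆ A)).card
      = (n - j).choose (m - j) := by
  classical
  have h2 : ((Finset.powersetCard (m - j) ((Finset.univ : Finset (Fin n)) \ B))).card
      = (n - j).choose (m - j) := by
    rw [Finset.card_powersetCard, Finset.card_sdiff_of_subset (Finset.subset_univ B), Finset.card_univ,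
      Fintype.card_fin, hB]
  rw [← h2]
  apply Finset.card_bij' (fun A _ => A \ B) (fun C _ => B ∪ C)
  · intro A hA
    simp only [Finset.mem_filter, Finset.mem_powersetCard] at hA
    obtain ⟨⟨-, hAc⟩, hBA⟩ := hA
    rw [Finset.mem_powersetCard]
    constructor
    · intro x hx; simp only [Finset.mem_sdiff] at hx ⊢
      exact ⟨Finset.mem_univ x, hx.2⟩
    · rw [Finset.card_sdiff_of_subset hBA, hAc, hB]
  · intro C hC
    rw [Finset.mem_powersetCard] at hC
    obtain ⟨hCs, hCc⟩ := hC
    have hdisj : Disjoint B C := by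
      refine Finset.disjoint_left.2 fun x hxB hxC => ?_
      have := hCs hxC
      simp only [Finset.mem_sdiff] at this
      exact this.2 hxB
    simp only [Finset.mem_filter, Finset.mem_powersetCard]
    refine ⟨⟨Finset.subset_univ _, ?_⟩, Finset.subset_union_left⟩
    rw [Finset.card_union_of_disjoint hdisj, hB, hCc]
    omega
  · intro A hA
    simp only [Finset.mem_filter] at hA
    exact Finset.union_sdiff_of_subset hA.2
  · intro C hC
    rw [Finset.mem_powersetCard] at hC
    have hdisj : Disjoint B C := by
      refine Finset.disjoint_left.2 fun x hxB hxC => ?_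
      have := hC.1 hxC
      simp only [Finset.mem_sdiff] at this
      exact this.2 hxB
    rw [Finset.union_sdiff_cancel_left hdisj]

lemma key_shift {R : Type*} [CommRing R] {n : ℕ} (m : ℕ) (a : Fin n → R) (c : R) :
    ∑ A ∈ Finset.powersetCard m (Finset.univ : Finset (Fin n)), ∏ k ∈ A, (a k + c)
      = ∑ j ∈ Finset.range (m + 1), ((n - j).choose (m - j)) •
          (c ^ (m - j) * ∑ B ∈ Finset.powersetCard j (Finset.univ : Finset (Fin n)),
            ∏ k ∈ B, a k) := by
  classical
  have h1 : ∀ A ∈ Finset.powersetCard m (Finset.univ : Finset (Fin n)),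
      ∏ k ∈ A, (a k + c)
        = ∑ j ∈ Finset.range (m + 1), ∑ B ∈ Finset.powersetCard j A,
            (∏ k ∈ B, a k) * c ^ (m - j) := by
    intro A hA
    obtain ⟨-, hAc⟩ := Finset.mem_powersetCard.1 hA
    rw [Finset.prod_add]
    rw [show A.powerset.sum (fun t => (∏ i ∈ t, a i) * ∏ i ∈ A \ t, c)
        = ∑ j ∈ Finset.range (A.card + 1), ∑ t ∈ Finset.powersetCard j A,
            ((∏ i ∈ t, a i) * ∏ i ∈ A \ t, c) from Finset.sum_powerset A _, hAc]
    refine Finset.sum_congr rfl fun j hj => Finset.sum_congr rfl fun B hB => ?_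
    obtain ⟨hBA, hBc⟩ := Finset.mem_powersetCard.1 hB
    rw [Finset.prod_const, Finset.card_sdiff_of_subset hBA, hAc, hBc]
  rw [Finset.sum_congr rfl h1, Finset.sum_comm]
  refine Finset.sum_congr rfl fun j hj => ?_
  rw [Finset.mem_range] at hj
  have hswap : ∑ A ∈ Finset.powersetCard m (Finset.univ : Finset (Fin n)),
      ∑ B ∈ Finset.powersetCard j A, (∏ k ∈ B, a k) * c ^ (m - j)
      = ∑ B ∈ Finset.powersetCard j (Finset.univ : Finset (Fin n)),
        ∑ A ∈ (Finset.powersetCard m (Finset.univ : Finset (Fin n))).filter (fun A => B ⊆ A),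
          (∏ k ∈ B, a k) * c ^ (m - j) := by
    apply Finset.sum_comm'
    intro A B
    simp only [Finset.mem_powersetCard, Finset.mem_filter]
    tauto
  rw [hswap]
  have h3 : ∀ B ∈ Finset.powersetCard j (Finset.univ : Finset (Fin n)),
      ∑ A ∈ (Finset.powersetCard m (Finset.univ : Finset (Fin n))).filter (fun A => B ⊆ A),
          (∏ k ∈ B, a k) * c ^ (m - j)
        = ((n - j).choose (m - j)) • ((∏ k ∈ B, a k) * c ^ (m - j)) := by
    intro B hB
    rw [Finset.sum_const,
      card_filter_superset B (Finset.mem_powersetCard.1 hB).2 (by omega)]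
  rw [Finset.sum_congr rfl h3, ← Finset.smul_sum]
  congr 1
  rw [Finset.mul_sum]
  exact Finset.sum_congr rfl fun B _ => mul_comm _ _

/-! ### Shift invariance -/

open MvPolynomial

lemma shift_nat (n : ℕ) (P : MvPolynomial (Fin n) ℂ)
    (hshift : MvPolynomial.aeval (fun i : Fin n => MvPolynomial.X i + 1) P = P) (m : ℕ) :
    MvPolynomial.aeval (fun i : Fin n => MvPolynomial.X i + (m : MvPolynomial (Fin n) ℂ)) P
      = P := by
  induction m with
  | zero => simpa using aeval_X_left_apply P
  | succ m ih =>
    have hcomp : (MvPolynomial.aeval (fun i : Fin n => MvPolynomial.X i + 1)).comp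
        (MvPolynomial.aeval (fun i : Fin n => MvPolynomial.X i + (m : MvPolynomial (Fin n) ℂ)))
        = MvPolynomial.aeval
            (fun i : Fin n => MvPolynomial.X i + ((m + 1 : ℕ) : MvPolynomial (Fin n) ℂ)) := by
      rw [MvPolynomial.comp_aeval]
      congr 1
      funext i
      rw [map_add, MvPolynomial.aeval_X, map_natCast, Nat.cast_add, Nat.cast_one]
      ring
    have h := congrArg
      (MvPolynomial.aeval (fun i : Fin n => (MvPolynomial.X i + 1 : MvPolynomial (Fin n) ℂ))) ih
    rw [hshift] at h
    calc MvPolynomial.aeval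
          (fun i : Fin n => MvPolynomial.X i + ((m + 1 : ℕ) : MvPolynomial (Fin n) ℂ)) P
        = (MvPolynomial.aeval (fun i : Fin n => MvPolynomial.X i + 1)).comp
            (MvPolynomial.aeval
              (fun i : Fin n => MvPolynomial.X i + (m : MvPolynomial (Fin n) ℂ))) P := by
          rw [hcomp]
      _ = P := by rw [AlgHom.comp_apply]; exact h

lemma shift_poly (n : ℕ) (P : MvPolynomial (Fin n) ℂ)
    (hshift : MvPolynomial.aeval (fun i : Fin n => MvPolynomial.X i + 1) P = P) :
    MvPolynomial.aeval (fun i : Fin n => MvPolynomial.X i - y0 n) P = P := by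
  classical
  set φ : MvPolynomial (Fin n) ℂ →ₐ[ℂ] Polynomial (MvPolynomial (Fin n) ℂ) :=
    MvPolynomial.aeval (fun i : Fin n => Polynomial.C (MvPolynomial.X i) + Polynomial.X) with hφ
  have heval : ∀ r : MvPolynomial (Fin n) ℂ, (Polynomial.evalRingHom r).comp φ.toRingHom
      = (MvPolynomial.aeval (fun i : Fin n => MvPolynomial.X i + r)).toRingHom := by
    intro r
    apply MvPolynomial.ringHom_ext
    · intro a
      simp [hφ, MvPolynomial.algebraMap_eq]
    · intro i
      simp [hφ]
  have hroot : ∀ m : ℕ, (φ P - Polynomial.C P).IsRoot ((m : ℕ) : MvPolynomial (Fin n) ℂ) := by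
    intro m
    have h1 := RingHom.congr_fun (heval ((m : ℕ) : MvPolynomial (Fin n) ℂ)) P
    simp only [RingHom.coe_comp, Function.comp_apply, AlgHom.toRingHom_eq_coe,
      RingHom.coe_coe, Polynomial.coe_evalRingHom] at h1
    simp only [Polynomial.IsRoot, Polynomial.eval_sub, Polynomial.eval_C, h1,
      shift_nat n P hshift m, sub_self]
  have hzero : φ P - Polynomial.C P = 0 := by
    apply Polynomial.eq_zero_of_infinite_isRoot
    apply Set.infinite_of_injective_forall_mem
      (f := fun m : ℕ => ((m : ℕ) : MvPolynomial (Fin n) ℂ))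
    · exact Nat.cast_injective
    · exact hroot
  have hCP : φ P = Polynomial.C P := by rwa [sub_eq_zero] at hzero
  have h2 := RingHom.congr_fun (heval (-(y0 n))) P
  simp only [RingHom.coe_comp, Function.comp_apply, AlgHom.toRingHom_eq_coe,
    RingHom.coe_coe, Polynomial.coe_evalRingHom] at h2
  rw [hCP, Polynomial.eval_C] at h2
  rw [show (fun i : Fin n => MvPolynomial.X i - y0 n)
      = (fun i : Fin n => MvPolynomial.X i + (-(y0 n))) by funext i; ring]
  exact h2.symm

/-! ### Elementary symmetric polynomials in the `y` variables -/

/-- `Ey n j` is the `j`-th elementary symmetric polynomial of `y₁, …, yₙ`. -/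
def Ey (n j : ℕ) : MvPolynomial (Fin n) ℂ :=
  ∑ B ∈ Finset.powersetCard j (Finset.univ : Finset (Fin n)), ∏ k ∈ B, ypoly n k

lemma Ey_zero (n : ℕ) : Ey n 0 = 1 := by
  simp [Ey]

lemma Ey_one (n : ℕ) (hn : 1 ≤ n) : Ey n 1 = 0 := by
  have hsum : Ey n 1 = ∑ k : Fin n, ypoly n k := by
    rw [Ey, Finset.powersetCard_one, Finset.sum_map]
    simp
  rw [hsum]
  have : ∑ k : Fin n, ypoly n k
      = (∑ k : Fin n, MvPolynomial.X k) - (n : ℕ) • y0 n := by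
    simp [ypoly, Finset.sum_sub_distrib]
  rw [this, nsmul_eq_mul, y0]
  rw [show ((n : ℕ) : MvPolynomial (Fin n) ℂ) = MvPolynomial.C ((n : ℕ) : ℂ) by
    simp]
  rw [← mul_assoc, ← MvPolynomial.C_mul, mul_inv_cancel₀ (by exact_mod_cast by omega),
    MvPolynomial.C_1, one_mul, sub_self]

lemma tpoly_eq_Ey (n : ℕ) (i : Fin (n - 1)) : tpoly n i = Ey n (i.val + 2) := rfl

lemma esymm_eq_sum (n m : ℕ) :
    MvPolynomial.esymm (Fin n) ℂ m
      = ∑ j ∈ Finset.range (m + 1), ((n - j).choose (m - j)) •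
          (y0 n ^ (m - j) * Ey n j) := by
  have h : MvPolynomial.esymm (Fin n) ℂ m
      = ∑ A ∈ Finset.powersetCard m (Finset.univ : Finset (Fin n)),
          ∏ k ∈ A, (ypoly n k + y0 n) := by
    simp only [MvPolynomial.esymm]
    refine Finset.sum_congr rfl fun A _ => Finset.prod_congr rfl fun k _ => ?_
    rw [ypoly, sub_add_cancel]
  rw [h, key_shift]
  rfl

lemma aeval_ypoly_esymm (n m : ℕ) :
    MvPolynomial.aeval (ypoly n) (MvPolynomial.esymm (Fin n) ℂ m) = Ey n m := by
  simp only [MvPolynomial.esymm, Ey, map_sum]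
  refine Finset.sum_congr rfl fun A _ => ?_
  rw [map_prod]
  exact Finset.prod_congr rfl fun k _ => MvPolynomial.aeval_X _ _

/-! ### Algebraic independence machinery -/

/-- The family `y₀, t₂, …, tₙ` indexed by `Option (Fin (n-1))`. -/
def wfam (n : ℕ) : Option (Fin (n - 1)) → MvPolynomial (Fin n) ℂ :=
  fun o => o.elim (y0 n) (tpoly n)

/-- Abstract variable standing for `Ey n j`. -/
def Tp (n : ℕ) : ℕ → MvPolynomial (Option (Fin (n - 1))) ℂ := fun j =>
  if j = 0 then 1
  else if j = 1 then 0
  else if h : j - 2 < n - 1 then MvPolynomial.X (some ⟨j - 2, h⟩) else 0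

/-- Expression of `esymm (i+1)` in terms of the abstract variables. -/
def Fexp (n : ℕ) (i : Fin n) : MvPolynomial (Option (Fin (n - 1))) ℂ :=
  ∑ j ∈ Finset.range (i.val + 2),
    MvPolynomial.C (((n - j).choose (i.val + 1 - j) : ℕ) : ℂ) *
      MvPolynomial.X (none : Option (Fin (n - 1))) ^ (i.val + 1 - j) * Tp n j

lemma aeval_w_Tp (n : ℕ) (hn : 1 ≤ n) (j : ℕ) (hjn : j ≤ n) :
    MvPolynomial.aeval (wfam n) (Tp n j) = Ey n j := by
  rcases Nat.lt_or_ge j 2 with hj | hj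
  · interval_cases j
    · simp [Tp, Ey_zero]
    · simp [Tp, Ey_one n hn]
  · have hcond : j - 2 < n - 1 := by omega
    have hTp : Tp n j = MvPolynomial.X (some ⟨j - 2, hcond⟩) := by
      simp only [Tp]
      rw [if_neg (by omega), if_neg (by omega), dif_pos hcond]
    rw [hTp, MvPolynomial.aeval_X]
    show tpoly n ⟨j - 2, hcond⟩ = Ey n j
    rw [tpoly_eq_Ey]
    congr 1
    show j - 2 + 2 = j
    omega

lemma aeval_w_Fexp (n : ℕ) (hn : 1 ≤ n) (i : Fin n) :
    MvPolynomial.aeval (wfam n) (Fexp n i)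
      = MvPolynomial.esymm (Fin n) ℂ (i.val + 1) := by
  rw [esymm_eq_sum n (i.val + 1), Fexp, map_sum]
  refine Finset.sum_congr rfl fun j hj => ?_
  rw [Finset.mem_range] at hj
  rw [map_mul, map_mul, map_pow, MvPolynomial.aeval_C, MvPolynomial.aeval_X]
  rw [aeval_w_Tp n hn j (by omega)]
  show MvPolynomial.C _ * (wfam n none) ^ _ * _ = _
  rw [show wfam n none = y0 n from rfl, nsmul_eq_mul]
  rw [show (((n - j).choose (i.val + 1 - j) : ℕ) : MvPolynomial (Fin n) ℂ)
      = MvPolynomial.C (((n - j).choose (i.val + 1 - j) : ℕ) : ℂ) by simp]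
  ring

lemma comp_aeval_w_Fexp (n : ℕ) (hn : 1 ≤ n) :
    (MvPolynomial.aeval (wfam n)).comp (MvPolynomial.aeval (Fexp n))
      = MvPolynomial.aeval (fun i : Fin n => MvPolynomial.esymm (Fin n) ℂ (i.val + 1)) := by
  apply MvPolynomial.algHom_ext
  intro i
  simp only [AlgHom.comp_apply, MvPolynomial.aeval_X]
  exact aeval_w_Fexp n hn i

lemma Fexp_surjective (n : ℕ) (hn : 1 ≤ n) :
    Function.Surjective (MvPolynomial.aeval (Fexp n) :
      MvPolynomial (Fin n) ℂ →ₐ[ℂ] MvPolynomial (Option (Fin (n - 1))) ℂ) := by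
  rw [← AlgHom.range_eq_top, eq_top_iff, ← MvPolynomial.adjoin_range_X]
  apply Algebra.adjoin_le
  rintro _ ⟨o, rfl⟩
  have hC : ∀ c : ℂ, MvPolynomial.C c ∈ (MvPolynomial.aeval (Fexp n) :
      MvPolynomial (Fin n) ℂ →ₐ[ℂ] _).range :=
    fun c => ⟨MvPolynomial.C c, by simp⟩
  have hnone : MvPolynomial.X (none : Option (Fin (n - 1)))
      ∈ (MvPolynomial.aeval (Fexp n) : MvPolynomial (Fin n) ℂ →ₐ[ℂ] _).range := by
    have hF0 : Fexp n ⟨0, by omega⟩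
        = MvPolynomial.C ((n : ℕ) : ℂ) * MvPolynomial.X (none : Option (Fin (n - 1))) := by
      rw [Fexp]
      rw [Finset.sum_range_succ, Finset.sum_range_one]
      simp [Tp, Nat.choose_one_right]
    have heq : (MvPolynomial.aeval (Fexp n))
        (MvPolynomial.C ((n : ℂ))⁻¹ * MvPolynomial.X (⟨0, by omega⟩ : Fin n))
        = MvPolynomial.X (none : Option (Fin (n - 1))) := by
      rw [map_mul, MvPolynomial.aeval_C, MvPolynomial.aeval_X, hF0,
        MvPolynomial.algebraMap_eq, ← mul_assoc, ← MvPolynomial.C_mul]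
      rw [show ((n : ℕ) : ℂ) = (n : ℂ) from rfl, inv_mul_cancel₀ (by exact_mod_cast by omega),
        MvPolynomial.C_1, one_mul]
    exact ⟨_, heq⟩
  have hsome : ∀ d : ℕ, ∀ hd : d < n - 1,
      MvPolynomial.X (some (⟨d, hd⟩ : Fin (n - 1)))
        ∈ (MvPolynomial.aeval (Fexp n) : MvPolynomial (Fin n) ℂ →ₐ[ℂ] _).range := by
    intro d
    induction d using Nat.strong_induction_on with
    | _ d ih =>
      intro hd
      have hi : d + 1 < n := by omega
      have hsplit : Fexp n ⟨d + 1, hi⟩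
          = (∑ j ∈ Finset.range (d + 2),
              MvPolynomial.C (((n - j).choose (d + 2 - j) : ℕ) : ℂ) *
                MvPolynomial.X (none : Option (Fin (n - 1))) ^ (d + 2 - j) * Tp n j)
            + MvPolynomial.X (some (⟨d, hd⟩ : Fin (n - 1))) := by
        rw [Fexp]
        show ∑ j ∈ Finset.range (d + 1 + 2), _ = _
        rw [Finset.sum_range_succ]
        congr 1
        have hTp : Tp n (d + 2) = MvPolynomial.X (some (⟨d, hd⟩ : Fin (n - 1))) := by
          simp only [Tp]
          rw [if_neg (by omega), if_neg (by omega)]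
          rw [dif_pos (show d + 2 - 2 < n - 1 by omega)]
          rfl
        rw [hTp]
        simp
      have hmem : (∑ j ∈ Finset.range (d + 2),
          MvPolynomial.C (((n - j).choose (d + 2 - j) : ℕ) : ℂ) *
            MvPolynomial.X (none : Option (Fin (n - 1))) ^ (d + 2 - j) * Tp n j)
          ∈ (MvPolynomial.aeval (Fexp n) : MvPolynomial (Fin n) ℂ →ₐ[ℂ] _).range := by
        refine Subalgebra.sum_mem _ fun j hj => ?_
        rw [Finset.mem_range] at hj
        refine Subalgebra.mul_mem _ (Subalgebra.mul_mem _ (hC _)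
          (Subalgebra.pow_mem _ hnone _)) ?_
        rcases Nat.lt_or_ge j 2 with h2 | h2
        · interval_cases j
          · rw [show Tp n 0 = 1 by simp [Tp]]
            exact Subalgebra.one_mem _
          · rw [show Tp n 1 = 0 by simp [Tp]]
            exact Subalgebra.zero_mem _
        · have hcond : j - 2 < n - 1 := by omega
          have hTp : Tp n j = MvPolynomial.X (some (⟨j - 2, hcond⟩ : Fin (n - 1))) := by
            simp only [Tp]
            rw [if_neg (by omega), if_neg (by omega), dif_pos hcond]
          rw [hTp]
          exact ih (j - 2) (by omega) hcond
      have heq : MvPolynomial.X (some (⟨d, hd⟩ : Fin (n - 1)))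
          = (MvPolynomial.aeval (Fexp n) : MvPolynomial (Fin n) ℂ →ₐ[ℂ] _)
              (MvPolynomial.X (⟨d + 1, hi⟩ : Fin n))
            - (∑ j ∈ Finset.range (d + 2),
                MvPolynomial.C (((n - j).choose (d + 2 - j) : ℕ) : ℂ) *
                  MvPolynomial.X (none : Option (Fin (n - 1))) ^ (d + 2 - j) * Tp n j) := by
        rw [MvPolynomial.aeval_X, hsplit]
        ring
      rw [heq]
      exact Subalgebra.sub_mem _ ⟨MvPolynomial.X _, rfl⟩ hmem
  cases o with
  | none => exact hnone
  | some k =>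
    have := hsome k.val k.isLt
    simpa using this

lemma esymm_indep (n : ℕ) :
    Function.Injective (MvPolynomial.aeval
      (fun i : Fin n => MvPolynomial.esymm (Fin n) ℂ (i.val + 1)) :
        MvPolynomial (Fin n) ℂ →ₐ[ℂ] MvPolynomial (Fin n) ℂ) := by
  have hval : ((MvPolynomial.symmetricSubalgebra (Fin n) ℂ).val).comp
      (MvPolynomial.esymmAlgHom (Fin n) ℂ n)
      = MvPolynomial.aeval (fun i : Fin n => MvPolynomial.esymm (Fin n) ℂ (i.val + 1)) := by
    apply MvPolynomial.algHom_ext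
    intro i
    simp [MvPolynomial.esymmAlgHom]
  rw [← hval]
  rw [AlgHom.coe_comp]
  exact Subtype.val_injective.comp (MvPolynomial.esymmAlgHom_fin_injective ℂ le_rfl)

lemma tpoly_indep (n : ℕ) (hn : 1 ≤ n) : AlgebraicIndependent ℂ (tpoly n) := by
  have hinj_w : Function.Injective (MvPolynomial.aeval (wfam n) :
      MvPolynomial (Option (Fin (n - 1))) ℂ →ₐ[ℂ] MvPolynomial (Fin n) ℂ) := by
    intro a b hab
    obtain ⟨a', rfl⟩ := Fexp_surjective n hn a
    obtain ⟨b', rfl⟩ := Fexp_surjective n hn b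
    have h1 : (MvPolynomial.aeval (fun i : Fin n => MvPolynomial.esymm (Fin n) ℂ (i.val + 1))) a'
        = (MvPolynomial.aeval (fun i : Fin n => MvPolynomial.esymm (Fin n) ℂ (i.val + 1))) b' := by
      rw [← comp_aeval_w_Fexp n hn]
      exact hab
    rw [esymm_indep n h1]
  have hw : AlgebraicIndependent ℂ (wfam n) :=
    algebraicIndependent_iff_injective_aeval.2 hinj_w
  have hcomp := hw.comp some (Option.some_injective _)
  have : wfam n ∘ some = tpoly n := funext fun i => rfl
  rwa [this] at hcomp

lemma mem_adjoin_tpoly (n : ℕ) (hn : 1 ≤ n) (P : MvPolynomial (Fin n) ℂ)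
    (hsym : MvPolynomial.IsSymmetric P)
    (hshift : MvPolynomial.aeval (fun i : Fin n => MvPolynomial.X i + 1) P = P) :
    P ∈ Algebra.adjoin ℂ (Set.range (tpoly n)) := by
  obtain ⟨q, hq⟩ := (MvPolynomial.esymmAlgHom_fin_bijective ℂ n).2
    ⟨P, (MvPolynomial.mem_symmetricSubalgebra P).2 hsym⟩
  have hPq : P = MvPolynomial.aeval
      (fun i : Fin n => MvPolynomial.esymm (Fin n) ℂ ((i : ℕ) + 1)) q := by
    have := MvPolynomial.esymmAlgHom_apply q (σ := Fin n) (R := ℂ) (n := n)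
    rw [hq] at this
    exact this
  have hψ : MvPolynomial.aeval (ypoly n) P = P := shift_poly n P hshift
  have hEv : MvPolynomial.aeval (ypoly n)
      (MvPolynomial.aeval (fun i : Fin n => MvPolynomial.esymm (Fin n) ℂ ((i : ℕ) + 1)) q)
      = MvPolynomial.aeval (fun i : Fin n => Ey n ((i : ℕ) + 1)) q := by
    have hc : (MvPolynomial.aeval (ypoly n)).comp
        (MvPolynomial.aeval (fun i : Fin n => MvPolynomial.esymm (Fin n) ℂ ((i : ℕ) + 1)))
        = MvPolynomial.aeval (fun i : Fin n => Ey n ((i : ℕ) + 1)) := by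
      apply MvPolynomial.algHom_ext
      intro i
      simp only [AlgHom.comp_apply, MvPolynomial.aeval_X]
      exact aeval_ypoly_esymm n _
    exact congrFun (congrArg (fun f => f.toFun) hc) q
  have hP2 : P = MvPolynomial.aeval (fun i : Fin n => Ey n ((i : ℕ) + 1)) q := by
    conv_lhs => rw [← hψ, hPq, hEv]
  rw [hP2]
  have hrange : MvPolynomial.aeval (fun i : Fin n => Ey n ((i : ℕ) + 1)) q
      ∈ Algebra.adjoin ℂ (Set.range fun i : Fin n => Ey n ((i : ℕ) + 1)) := by
    rw [Algebra.adjoin_range_eq_range_aeval]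
    exact ⟨q, rfl⟩
  refine Algebra.adjoin_le ?_ hrange
  rintro _ ⟨i, rfl⟩
  show Ey n ((i : ℕ) + 1) ∈ Algebra.adjoin ℂ (Set.range (tpoly n))
  by_cases h0 : (i : ℕ) = 0
  · rw [h0, Ey_one n hn]
    exact Subalgebra.zero_mem _
  · have hlt : (i : ℕ) - 1 < n - 1 := by
      have := i.isLt
      omega
    have h2 : (i : ℕ) + 1 = ((i : ℕ) - 1) + 2 := by omega
    rw [h2, show Ey n (((i : ℕ) - 1) + 2) = tpoly n ⟨(i : ℕ) - 1, hlt⟩ from rfl]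
    exact Algebra.subset_adjoin ⟨_, rfl⟩

/-- Invariant ring lemma: a symmetric polynomial invariant under the simultaneous shift
`xₖ ↦ xₖ + 1` lies in the subalgebra generated by `t₂, …, tₙ`, and `t₂, …, tₙ` are
algebraically independent over `ℂ`. -/
theorem invariant_ring_lemma (n : ℕ) (hn : 1 ≤ n) (P : MvPolynomial (Fin n) ℂ)
    (hsym : MvPolynomial.IsSymmetric P)
    (hshift : MvPolynomial.aeval (fun i : Fin n => MvPolynomial.X i + 1) P = P) :
    P ∈ Algebra.adjoin ℂ (Set.range (tpoly n)) ∧ AlgebraicIndependent ℂ (tpoly n) :=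
  ⟨mem_adjoin_tpoly n hn P hsym hshift, tpoly_indep n hn⟩
end
end
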